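/- arXiv:2207.08912 — 5 statements merged into one kernel-verified Lean document; each statement's English description precedes it below -/
import Mathlib

section
/- Let G be a group and let n ≥ 2. The natural action of Aut(F_n) on X = Hom(F_n, G) is faithful if and only if there is no nonempty reduced word in an n-letter alphabet that is an identity in G; precisely: (every automorphism σ of F_n satisfying x ∘ σ = x for all homomorphisms x : F_n → G is the identity) if and only if (for every element w ≠ 1 of F_n there exists a group homomorphism x : F_n → G with x(w) ≠ 1). -/
namespace AutFaithfulAux

open FreeGroup List

variable {α : Type*} [DecidableEq α]

lemma aux_rep {β : Type*} : ∀ (M : List β) (y : β),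
    (y :: M).dropLast = M → y :: M = List.replicate (M.length + 1) y := by
  intro M
  induction M with
  | nil => intro y _; rfl
  | cons z N ih =>
    intro y h
    rw [List.dropLast_cons_of_ne_nil (by simp)] at h
    obtain ⟨hy, hN⟩ := List.cons_eq_cons.mp h
    subst hy
    have h2 := ih y hN
    rw [List.replicate_succ, List.length_cons]
    rw [← h2]

lemma aux_rep2 {β : Type*} : ∀ (L : List β) (x : β),
    x :: L = L ++ [x] → L = List.replicate L.length x := by
  intro L
  induction L with
  | nil => intro x _; rfl
  | cons y M ih =>
    intro x h
    simp only [List.cons_append, List.cons_eq_cons] at h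
    obtain ⟨hxy, h2⟩ := h
    subst hxy
    have h3 := ih x h2
    rw [List.length_cons, List.replicate_succ, ← h3]

lemma red_cons' (M : List (α × Bool)) (y x : α × Bool) (h : reduce (y :: M) = y :: M) :
    reduce (x :: y :: M) = if x.1 = y.1 ∧ x.2 = !y.2 then M else x :: y :: M := by
  rw [reduce.cons, h]

lemma invRev_append_singleton (L : List (α × Bool)) (x : α × Bool) :
    invRev (L ++ [x]) = (x.1, !x.2) :: invRev L := by
  simp [invRev]

lemma red_append' (D : List (α × Bool)) (z x : α × Bool)
    (h : reduce (D ++ [z]) = D ++ [z]) :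
    reduce (D ++ [z] ++ [x]) = if x.1 = z.1 ∧ x.2 = !z.2 then D else D ++ [z] ++ [x] := by
  have hinv : reduce (invRev (D ++ [z])) = invRev (D ++ [z]) := by
    rw [reduce_invRev, h]
  have h1 : invRev (D ++ [z] ++ [x]) = (x.1, !x.2) :: (z.1, !z.2) :: invRev D := by
    rw [invRev_append_singleton, invRev_append_singleton]
  have h2 : invRev (D ++ [z]) = (z.1, !z.2) :: invRev D := invRev_append_singleton D z
  have key : reduce (invRev (D ++ [z] ++ [x]))
      = if x.1 = z.1 ∧ x.2 = !z.2 then invRev D else invRev (D ++ [z] ++ [x]) := by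
    rw [h1]
    rw [h2] at hinv
    rw [red_cons' _ _ _ hinv]
    have hcond : ((x.1, !x.2).1 = (z.1, !z.2).1 ∧ (x.1, !x.2).2 = !(z.1, !z.2).2)
        ↔ (x.1 = z.1 ∧ x.2 = !z.2) := by
      simp
    by_cases hc : x.1 = z.1 ∧ x.2 = !z.2
    · rw [if_pos (hcond.mpr hc), if_pos hc]
    · rw [if_neg (fun hh => hc (hcond.mp hh)), if_neg hc]
  have key2 := congrArg invRev key
  rw [← reduce_invRev, invRev_invRev] at key2
  rw [key2]
  by_cases hc : x.1 = z.1 ∧ x.2 = !z.2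
  · rw [if_pos hc, if_pos hc, invRev_invRev]
  · rw [if_neg hc, if_neg hc, invRev_invRev]

/-- An element commuting with a generator is a power of that generator (word form). -/
lemma comm_replicate (a : α) (w : FreeGroup α) (h : w * of a = of a * w) :
    ∃ (k : ℕ) (s : Bool), w.toWord = List.replicate k (a, s) := by
  by_cases hw : w = 1
  · exact ⟨0, true, by simp [hw]⟩
  have hne : w.toWord ≠ [] := fun hh => hw (toWord_eq_nil_iff.mp hh)
  set L := w.toWord with hLdef
  have hred : reduce L = L := reduce_toWord w
  have hmk : w = FreeGroup.mk L := (mk_toWord).symm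
  have heq : reduce ((a, true) :: L) = reduce (L ++ [(a, true)]) := by
    have e1 : of a * w = FreeGroup.mk ((a, true) :: L) := by
      rw [hmk, show (of a : FreeGroup α) = FreeGroup.mk [(a, true)] from rfl, mul_mk]
      rfl
    have e2 : w * of a = FreeGroup.mk (L ++ [(a, true)]) := by
      rw [hmk, show (of a : FreeGroup α) = FreeGroup.mk [(a, true)] from rfl, mul_mk]
    calc reduce ((a, true) :: L) = (of a * w).toWord := by rw [e1, toWord_mk]
      _ = (w * of a).toWord := by rw [h]
      _ = reduce (L ++ [(a, true)]) := by rw [e2, toWord_mk]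
  obtain ⟨y, M, hL⟩ : ∃ y M, L = y :: M := by
    cases hL' : L with
    | nil => exact absurd hL' hne
    | cons y M => exact ⟨y, M, rfl⟩
  have hL2 : L.dropLast ++ [L.getLast hne] = L := List.dropLast_append_getLast hne
  set z := L.getLast hne with hz
  set D := L.dropLast with hD
  have hlen : L.length = D.length + 1 := by
    conv_lhs => rw [← hL2]
    simp
  have lhs : reduce ((a, true) :: L) = if (a,true).1 = y.1 ∧ (a,true).2 = !y.2 then M
      else (a, true) :: y :: M := by
    rw [hL]; exact red_cons' M y (a, true) (hL ▸ hred)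
  have rhs : reduce (L ++ [(a,true)]) = if (a,true).1 = z.1 ∧ (a,true).2 = !z.2 then D
      else D ++ [z] ++ [(a,true)] := by
    conv_lhs => rw [← hL2]
    exact red_append' D z (a,true) (by rw [hL2]; exact hred)
  rw [lhs, rhs] at heq
  by_cases c1 : (a,true).1 = y.1 ∧ (a,true).2 = !y.2 <;>
    by_cases c2 : (a,true).1 = z.1 ∧ (a,true).2 = !z.2
  · -- both cancel : M = D, so L is a constant list of (a, false)
    rw [if_pos c1, if_pos c2] at heq
    have hy : y = (a, false) := by
      obtain ⟨y1, y2⟩ := y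
      obtain ⟨u1, u2⟩ := c1
      simp only at u1 u2
      subst u1
      cases y2
      · rfl
      · simp at u2
    have hdl : (y :: M).dropLast = M := by
      rw [← hL, ← hD, ← heq]
    have hrep := aux_rep M y hdl
    exact ⟨M.length + 1, false, by rw [hL, hrep, hy]⟩
  · rw [if_pos c1, if_neg c2] at heq
    have hll := congrArg List.length heq
    rw [hL] at hlen
    simp at hll hlen
    omega
  · rw [if_neg c1, if_pos c2] at heq
    have hll := congrArg List.length heq
    rw [hL] at hlen
    simp at hll hlen
    omega
  · rw [if_neg c1, if_neg c2] at heq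
    rw [hL2] at heq
    have heq2 : (a, true) :: L = L ++ [(a, true)] := by
      conv_lhs => rw [hL]
      exact heq
    exact ⟨L.length, true, aux_rep2 L (a, true) heq2⟩

/-- Commuting with two distinct generators forces triviality. -/
lemma eq_one_of_comm_two {a b : α} (hab : a ≠ b) (w : FreeGroup α)
    (ha : w * of a = of a * w) (hb : w * of b = of b * w) : w = 1 := by
  obtain ⟨k, s, hk⟩ := comm_replicate a w ha
  obtain ⟨l, t, hl⟩ := comm_replicate b w hb
  by_contra hw
  have hne : w.toWord ≠ [] := fun hh => hw (toWord_eq_nil_iff.mp hh)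
  rw [hk] at hne hl
  cases k with
  | zero => simp at hne
  | succ k =>
    cases l with
    | zero => simp at hl
    | succ l =>
      rw [List.replicate_succ, List.replicate_succ] at hl
      exact hab (congrArg Prod.fst (List.cons_eq_cons.mp hl).1)

end AutFaithfulAux

/-- Faithfulness criterion for the action of `Aut(Fₙ)` on `Hom(Fₙ, G)`, `n ≥ 2`:
the action is faithful iff no nontrivial element of `Fₙ` is an identity in `G`. -/
theorem aut_action_faithful_iff_no_identity (G : Type*) [Group G] (n : ℕ) (hn : 2 ≤ n) :
    (∀ σ : MulAut (FreeGroup (Fin n)),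
        (∀ x : FreeGroup (Fin n) →* G, x.comp σ.toMonoidHom = x) → σ = 1) ↔
      (∀ w : FreeGroup (Fin n), w ≠ 1 → ∃ x : FreeGroup (Fin n) →* G, x w ≠ 1) := by
  constructor
  · intro hfaith w hw
    by_contra hcon
    push_neg at hcon
    -- conjugation by w fixes every homomorphism
    have h1 : (MulAut.conj w : MulAut (FreeGroup (Fin n))) = 1 := by
      apply hfaith
      intro x
      ext g
      simp [MulAut.conj, hcon]
    -- hence w is central
    have hcent : ∀ g : FreeGroup (Fin n), w * g = g * w := by
      intro g
      have h2 : w * g * w⁻¹ = g := by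
        have := congrArg (fun σ : MulAut (FreeGroup (Fin n)) => σ g) h1
        simpa [MulAut.conj] using this
      calc w * g = (w * g * w⁻¹) * w := by group
        _ = g * w := by rw [h2]
    have hab : (⟨0, by omega⟩ : Fin n) ≠ ⟨1, by omega⟩ := by
      simp [Fin.ext_iff]
    exact hw (AutFaithfulAux.eq_one_of_comm_two hab w
      (hcent (FreeGroup.of ⟨0, by omega⟩)) (hcent (FreeGroup.of ⟨1, by omega⟩)))
  · intro hsep σ hσ
    ext g
    show σ g = g
    have hfix : ∀ x : FreeGroup (Fin n) →* G, x (σ g) = x g := fun x =>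
      DFunLike.congr_fun (hσ x) g
    have h1 : σ g * g⁻¹ = 1 := by
      by_contra hne
      obtain ⟨x, hx⟩ := hsep _ hne
      apply hx
      rw [map_mul, map_inv, hfix, mul_inv_cancel]
    exact mul_inv_eq_one.mp h1
end

section
/- Let G be a virtually solvable group, i.e., G has a solvable subgroup of finite index, and let n ≥ 2. Then the natural action of Aut(F_n) on Hom(F_n, G) is not faithful: there exists an automorphism σ ≠ id of F_n such that x ∘ σ = x for every group homomorphism x : F_n → G. -/
/-!
A virtually solvable group `G` has a normal solvable subgroup `N` of finite index `k`, say with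
`derivedSeries N m = ⊥`. Then `g ^ k ∈ N` for every `g`, so the nested commutator word
`w = nestedCommutator m (f₁ ^ k) (f₂ ^ k)` is a law of `G`: every `x : Fₙ →* G` kills it, and hence
`x ∘ conj w = x`. A computation of the first and last letters of the reduced word of `w` shows that
`w` does not commute with `f₁`, so `conj w ≠ 1`.
-/

open scoped commutatorElement

section NestedCommutator

variable {G : Type*} [Group G]

/-- The conjugations keep the two arguments of the next commutator distinct; otherwise it would be
trivially `1`. -/
def nestedCommutator : ℕ → G → G → G
  | 0, a, b => ⁅a, b⁆
  | d + 1, a, b => ⁅a * nestedCommutator d a b * a⁻¹, b * nestedCommutator d a b * b⁻¹⁆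

theorem map_nestedCommutator {H : Type*} [Group H] (f : G →* H) (d : ℕ) (a b : G) :
    f (nestedCommutator d a b) = nestedCommutator d (f a) (f b) := by
  induction d with
  | zero => simp [nestedCommutator, commutatorElement_def]
  | succ d ih => simp [nestedCommutator, commutatorElement_def, ih]

theorem nestedCommutator_mem_derivedSeries (d : ℕ) (a b : G) :
    nestedCommutator d a b ∈ derivedSeries G (d + 1) := by
  induction d with
  | zero =>
    exact Subgroup.commutator_mem_commutator (Subgroup.mem_top a) (Subgroup.mem_top b)
  | succ d ih =>
    have hN := derivedSeries_normal G (d + 1)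
    exact Subgroup.commutator_mem_commutator (hN.conj_mem _ ih a) (hN.conj_mem _ ih b)

theorem nestedCommutator_eq_one_of_derivedSeries_eq_bot {m : ℕ} (hm : derivedSeries G m = ⊥)
    (a b : G) : nestedCommutator m a b = 1 := by
  have h := derivedSeries_antitone G (Nat.le_succ m) (nestedCommutator_mem_derivedSeries m a b)
  rwa [hm, Subgroup.mem_bot] at h

theorem exists_nestedCommutator_pow_eq_one
    (hG : ∃ S : Subgroup G, Group.IsSolvable S ∧ S.FiniteIndex) :
    ∃ m k : ℕ, k ≠ 0 ∧ ∀ g h : G, nestedCommutator m (g ^ k) (h ^ k) = 1 := by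
  obtain ⟨S, _, _⟩ := hG
  let N := S.normalCore
  have : Group.IsSolvable N := Group.isSolvable_of_isSolvable_injective
    (Subgroup.inclusion_injective S.normalCore_le)
  obtain ⟨m, hm⟩ := (Group.isSolvable_def N).mp this
  refine ⟨m, N.index, Subgroup.FiniteIndex.index_ne_zero, fun g h => ?_⟩
  have hlaw := nestedCommutator_eq_one_of_derivedSeries_eq_bot hm
    ⟨g ^ N.index, N.pow_index_mem g⟩ ⟨h ^ N.index, N.pow_index_mem h⟩
  simpa only [map_nestedCommutator, map_one, Subgroup.subtype_apply] using congrArg N.subtype hlaw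

end NestedCommutator

theorem MonoidHom.comp_conj_eq_self {G H : Type*} [Group G] [Group H] (f : G →* H) {w : G}
    (hw : f w = 1) : f.comp (MulAut.conj w).toMonoidHom = f := by
  ext g
  simp [hw]

namespace FreeGroup

variable {α : Type*} [DecidableEq α]

theorem toWord_mul_of_isReduced {x y : FreeGroup α} (h : IsReduced (x.toWord ++ y.toWord)) :
    (x * y).toWord = x.toWord ++ y.toWord := by
  rw [toWord_mul, h.reduce_eq]

def HasEnds (x : FreeGroup α) (p q : α × Bool) : Prop :=
  x.toWord.head? = some p ∧ x.toWord.getLast? = some q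

variable {x y : FreeGroup α} {p q r s : α × Bool}

/-- The hypothesis `h` is the relation of `FreeGroup.IsReduced`: the letters `q` and `r` do not
cancel. -/
theorem HasEnds.mul (hx : HasEnds x p q) (hy : HasEnds y r s) (h : q.1 = r.1 → q.2 = r.2) :
    HasEnds (x * y) p s := by
  have hred : IsReduced (x.toWord ++ y.toWord) := by
    refine List.isChain_append.mpr ⟨isReduced_toWord, isReduced_toWord, ?_⟩
    rintro a ha b hb
    rw [Option.mem_def, hx.2, Option.some_inj] at ha
    rw [Option.mem_def, hy.1, Option.some_inj] at hb
    exact ha ▸ hb ▸ h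
  rw [HasEnds, toWord_mul_of_isReduced hred]
  exact ⟨List.head?_append_of_ne_nil _ (List.ne_nil_of_mem (List.mem_of_mem_head? hx.1)) ▸ hx.1,
    List.getLast?_append_of_ne_nil _ (List.ne_nil_of_mem (List.mem_of_mem_getLast? hy.2)) ▸ hy.2⟩

theorem HasEnds.inv (hx : HasEnds x p q) : HasEnds x⁻¹ (q.1, !q.2) (p.1, !p.2) := by
  rw [HasEnds, toWord_inv, invRev, List.head?_reverse, List.getLast?_map, List.getLast?_reverse,
    List.head?_map, hx.1, hx.2]
  exact ⟨rfl, rfl⟩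

theorem HasEnds.conj (hx : HasEnds x p q) (hy : HasEnds y r s) (hqr : q.1 = r.1 → q.2 = r.2)
    (hsq : s.1 = q.1 → s.2 = !q.2) : HasEnds (x * y * x⁻¹) p (p.1, !p.2) :=
  (hx.mul hy hqr).mul hx.inv hsq

theorem hasEnds_of_pow (a : α) {k : ℕ} (hk : k ≠ 0) : HasEnds (of a ^ k) (a, true) (a, true) := by
  obtain ⟨k, rfl⟩ := Nat.exists_eq_succ_of_ne_zero hk
  rw [HasEnds, toWord_of_pow]
  exact ⟨rfl, List.getLast?_replicate ▸ rfl⟩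

theorem hasEnds_commutator {x y : FreeGroup α} {i j : α} {b c : Bool} (hij : i ≠ j)
    (hx : HasEnds x (i, true) (i, b)) (hy : HasEnds y (j, true) (j, c)) :
    HasEnds ⁅x, y⁆ (i, true) (j, false) := by
  rw [commutatorElement_def]
  exact ((hx.mul hy fun h => (hij h).elim).mul hx.inv fun h => (hij h.symm).elim).mul hy.inv
    fun h => (hij h).elim

theorem hasEnds_nestedCommutator {i j : α} (hij : i ≠ j) {k : ℕ} (hk : k ≠ 0) (d : ℕ) :
    HasEnds (nestedCommutator d (of i ^ k) (of j ^ k)) (i, true) (j, false) := by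
  have hi := hasEnds_of_pow i hk
  have hj := hasEnds_of_pow j hk
  induction d with
  | zero => exact hasEnds_commutator hij hi hj
  | succ d ih =>
    exact hasEnds_commutator hij (hi.conj ih (fun _ => rfl) fun h => (hij h.symm).elim)
      (hj.conj ih (fun h => (hij h.symm).elim) fun _ => rfl)

theorem conj_ne_one_of_hasEnds {w : FreeGroup α} {i j : α} {b : Bool} (hij : i ≠ j)
    (hw : HasEnds w (i, true) (j, b)) : MulAut.conj w ≠ 1 := by
  intro h
  have hfix : w * of i * w⁻¹ = of i := by simpa using congrArg (· (of i)) h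
  have hconj := hw.conj (hasEnds_of_pow i one_ne_zero) (fun h => (hij h.symm).elim)
    fun h => (hij h).elim
  rw [pow_one, hfix] at hconj
  simpa [HasEnds, toWord_of] using hconj.2

end FreeGroup

/-- For a virtually solvable group `G` and `n ≥ 2`, the action of `Aut(Fₙ)` on
`Hom(Fₙ, G)` is not faithful. -/
theorem aut_action_not_faithful_of_virtually_solvable (G : Type*) [Group G]
    (hG : ∃ S : Subgroup G, IsSolvable S ∧ S.FiniteIndex) (n : ℕ) (hn : 2 ≤ n) :
    ∃ σ : MulAut (FreeGroup (Fin n)), σ ≠ 1 ∧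
      ∀ x : FreeGroup (Fin n) →* G, x.comp σ.toMonoidHom = x := by
  obtain ⟨m, k, hk, hlaw⟩ := exists_nestedCommutator_pow_eq_one hG
  let i : Fin n := ⟨0, by omega⟩
  let j : Fin n := ⟨1, by omega⟩
  have hij : i ≠ j := by simp [i, j]
  let w := nestedCommutator m (FreeGroup.of i ^ k) (FreeGroup.of j ^ k)
  refine ⟨MulAut.conj w,
    FreeGroup.conj_ne_one_of_hasEnds hij (FreeGroup.hasEnds_nestedCommutator hij hk m),
    fun x => x.comp_conj_eq_self ?_⟩
  rw [map_nestedCommutator, map_pow, map_pow, hlaw]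
end

section
/- Every virtually solvable group G satisfies a nontrivial group identity in two letters: there exists an element w ≠ 1 of the free group F_2 on two generators such that f(w) = 1 for every group homomorphism f : F_2 → G. -/
/-!
Let `N` be a normal solvable subgroup of finite index `n` and derived length `d` (the normal core of
the given solvable subgroup). Every homomorphism `F₂ → G` maps `H = ⟨x ^ n, y ^ n⟩` into `N`, so
it kills the `d`-th derived subgroup of `H`. That subgroup is nontrivial: by Nielsen–Schreier `H`
is free, and it is nonabelian, so it contains a copy of `F₂`, which maps onto the nonsolvable `S₅`.
-/

open FreeGroup

theorem FreeGroup.not_commute_of_pow_of_pow {α : Type*} {i j : α} (hij : i ≠ j) {m n : ℕ}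
    (hm : m ≠ 0) (hn : n ≠ 0) : ¬ Commute (of i ^ m) (of j ^ n) := by
  classical
  intro h
  -- Map to `x ↦ x + 1` and `x ↦ 2 * x` on `ℚ`: at `0` the two products give `m` and `2 ^ n * m`.
  let f : FreeGroup α →* Equiv.Perm ℚ :=
    FreeGroup.lift fun k => if k = i then Equiv.addRight 1 else Equiv.mulLeft₀ 2 two_ne_zero
  have h0 := congrArg (fun σ : Equiv.Perm ℚ => σ 0) (h.map f).eq
  simp only [f, map_pow, lift_apply_of, if_neg hij.symm] at h0
  have key : (m : ℚ) = 2 ^ n * m := by simpa [Equiv.Perm.coe_pow, mul_left_iterate] using h0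
  have h2n : (2 : ℚ) ^ n ≠ 1 := (one_lt_pow₀ one_lt_two hn).ne'
  exact h2n (mul_right_cancel₀ (Nat.cast_ne_zero.mpr hm) (by rw [one_mul]; exact key.symm))

theorem FreeGroup.not_isSolvable_fin_two : ¬ Group.IsSolvable (FreeGroup (Fin 2)) := by
  intro h
  let σ : Equiv.Perm (Fin 5) := finRotate 5
  have hsurj : Function.Surjective (FreeGroup.lift ![σ, Equiv.swap 0 (σ 0)]) := by
    rw [← MonoidHom.range_eq_top, FreeGroup.range_lift_eq_closure, Matrix.range_cons_cons_empty]
    exact Equiv.Perm.closure_cycle_adjacent_swap isCycle_finRotate support_finRotate 0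
  exact Equiv.Perm.not_isSolvable_fin_5 (Group.isSolvable_of_surjective hsurj)

theorem FreeGroup.not_isSolvable_of_ne {α : Type*} {i j : α} (hij : i ≠ j) :
    ¬ Group.IsSolvable (FreeGroup α) := by
  intro h
  have hinj : Function.Injective ![i, j] := by
    intro a b
    fin_cases a <;> fin_cases b <;> simp [hij, hij.symm]
  exact not_isSolvable_fin_two (Group.isSolvable_of_isSolvable_injective (map_injective hinj))

theorem FreeGroup.commute_of_subsingleton {α : Type*} [Subsingleton α] (a b : FreeGroup α) :
    Commute a b := by
  rcases isEmpty_or_nonempty α with _ | _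
  · exact Subsingleton.elim a b ▸ Commute.refl a
  · have : Unique α := uniqueOfSubsingleton (Classical.arbitrary α)
    let := IsCyclic.commGroup (α := FreeGroup α)
    exact mul_comm a b

theorem IsFreeGroup.commute_of_isSolvable {G : Type*} [Group G] [IsFreeGroup G] [Group.IsSolvable G]
    (a b : G) : Commute a b := by
  let e := IsFreeGroup.toFreeGroup G
  have : Subsingleton (IsFreeGroup.Generators G) := by
    refine ⟨fun i j => by_contra fun hij => not_isSolvable_of_ne hij ?_⟩
    exact Group.isSolvable_of_surjective (f := e.toMonoidHom) e.surjective
  simpa only [e.symm_apply_apply] using (commute_of_subsingleton (e a) (e b)).map e.symm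

theorem derivedSeries_le_ker {G H : Type*} [Group G] [Group H] (f : G →* H) {d : ℕ}
    (hd : derivedSeries H d = ⊥) : derivedSeries G d ≤ f.ker := by
  rw [← MonoidHom.comap_bot, ← Subgroup.map_le_iff_le_comap, ← hd]
  exact map_derivedSeries_le_derivedSeries f d

/-- Every virtually solvable group satisfies a nontrivial group identity in two letters. -/
theorem virtually_solvable_satisfies_identity (G : Type*) [Group G]
    (hG : ∃ S : Subgroup G, IsSolvable S ∧ S.FiniteIndex) :
    ∃ w : FreeGroup (Fin 2), w ≠ 1 ∧ ∀ f : FreeGroup (Fin 2) →* G, f w = 1 := by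
  obtain ⟨S, hS, hSfin⟩ := hG
  have : Group.IsSolvable S := hS
  set N := S.normalCore
  have : Group.IsSolvable N :=
    Group.isSolvable_of_isSolvable_injective (Subgroup.inclusion_injective S.normalCore_le)
  obtain ⟨d, hd⟩ := ‹Group.IsSolvable N›.solvable
  set H := Subgroup.closure (Set.range fun i : Fin 2 => of i ^ N.index)
  have hH : ¬ Group.IsSolvable H := by
    intro hH
    have hmem (i : Fin 2) : of i ^ N.index ∈ H := Subgroup.subset_closure ⟨i, rfl⟩
    exact not_commute_of_pow_of_pow (i := 0) (j := 1) (by decide) N.index_ne_zero_of_finite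
      N.index_ne_zero_of_finite
      ((IsFreeGroup.commute_of_isSolvable ⟨_, hmem 0⟩ ⟨_, hmem 1⟩).map H.subtype)
  obtain ⟨w, hw1⟩ := Subgroup.ne_bot_iff_exists_ne_one.mp fun h => hH ⟨⟨d, h⟩⟩
  refine ⟨w, by simpa using hw1, fun f => ?_⟩
  have hHN : H ≤ N.comap f := by
    rw [Subgroup.closure_le]
    rintro _ ⟨i, rfl⟩
    simpa using N.pow_index_mem (f (of i))
  let g : H →* N := (f.comp H.subtype).codRestrict N fun h => hHN h.2
  exact congrArg Subtype.val (derivedSeries_le_ker g hd w.2)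
end

section
/- Let G be a group and S a normal subgroup of G of finite index d. Let w be an element of the free group F_2 on generators f_1, f_2 such that h(w) = 1 for every group homomorphism h : F_2 → S, and let ψ_d : F_2 → F_2 be the endomorphism determined by ψ_d(f_1) = f_1^d, ψ_d(f_2) = f_2^d. Then f(ψ_d(w)) = 1 for every group homomorphism f : F_2 → G. -/
/-- If `S` is a normal subgroup of `G` of finite index `d` and `w ∈ F₂` is an identity in `S`,
then `ψ_d(w)` is an identity in `G`, where `ψ_d` sends each generator to its `d`-th power. -/
theorem identity_power_of_normal_finite_index (G : Type*) [Group G]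
    (S : Subgroup G) [S.Normal] (d : ℕ) (hd : S.index = d)
    (w : FreeGroup (Fin 2)) (hw : ∀ h : FreeGroup (Fin 2) →* S, h w = 1) :
    ∀ f : FreeGroup (Fin 2) →* G,
      f (FreeGroup.lift (fun i : Fin 2 => FreeGroup.of i ^ d) w) = 1 := by
  have key : ∀ g : G, g ^ d ∈ S := by
    intro g
    rcases Nat.eq_zero_or_pos d with h0 | hp
    · simpa [h0] using S.one_mem
    · have : S.FiniteIndex := ⟨by omega⟩
      exact hd ▸ S.pow_index_mem g
  intro f
  set h : FreeGroup (Fin 2) →* S :=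
    FreeGroup.lift (fun i => (⟨f (FreeGroup.of i) ^ d, key _⟩ : S)) with hh
  have hcomp : S.subtype.comp h = f.comp (FreeGroup.lift fun i : Fin 2 => FreeGroup.of i ^ d) := by
    apply FreeGroup.ext_hom
    intro i
    simp [hh]
  have := congrArg (fun φ : FreeGroup (Fin 2) →* G => φ w) hcomp
  simp only [MonoidHom.comp_apply] at this
  rw [← this, hw h, map_one]
end

section
/- Let G be a group containing a free subgroup of rank 2, i.e., there exists an injective group homomorphism F_2 → G. Then for every n ≥ 2 the natural action of Aut(F_n) on Hom(F_n, G) is faithful: for every automorphism σ ≠ id of F_n there exists a group homomorphism x : F_n → G with x ∘ σ ≠ x. -/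
open FreeGroup List

namespace AutFaithfulAux

abbrev F2 := FreeGroup (Fin 2)

/-- single-letter generator -/
def e (s : Bool) : F2 := FreeGroup.mk [((0 : Fin 2), s)]

lemma e_inv (s : Bool) : (e s)⁻¹ = e (!s) := by
  simp [e, FreeGroup.inv_mk, FreeGroup.invRev]

lemma cons_toWord (x : Fin 2 × Bool) (w : F2)
    (h : ∀ y ∈ w.toWord.head?, ¬(x.1 = y.1 ∧ x.2 = !y.2)) :
    (FreeGroup.mk [x] * w).toWord = x :: w.toWord := by
  conv_lhs => rw [← FreeGroup.mk_toWord (x := w), FreeGroup.mul_mk]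
  rw [FreeGroup.toWord_mk]
  show FreeGroup.reduce (x :: w.toWord) = _
  rw [FreeGroup.reduce.cons]
  rcases hL : w.toWord with _ | ⟨hd, tl⟩
  · simp
  · rw [← hL, FreeGroup.reduce_toWord, hL]
    have := h hd (by rw [hL]; rfl)
    simp [this]

lemma pow_e_mul_toWord (s : Bool) (i : ℕ) (w : F2)
    (h : ∀ y ∈ w.toWord.head?, y ≠ ((0 : Fin 2), !s)) :
    ((e s) ^ i * w).toWord = List.replicate i ((0 : Fin 2), s) ++ w.toWord := by
  induction i with
  | zero => simp
  | succ i ih =>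
    have hhead : ∀ y ∈ ((e s) ^ i * w).toWord.head?,
        ¬((((0 : Fin 2), s) : Fin 2 × Bool).1 = y.1 ∧ (((0 : Fin 2), s) : Fin 2 × Bool).2 = !y.2) := by
      rw [ih]
      cases i with
      | zero =>
        simp only [List.replicate, List.nil_append]
        intro y hy hc
        exact h y hy (Prod.ext hc.1.symm (by simp [hc.2]))
      | succ i =>
        simp only [List.replicate_succ, List.cons_append, List.head?_cons]
        intro y hy hc
        rw [Option.mem_some_iff] at hy
        subst hy
        exact (Bool.not_ne_self s) hc.2.symm
    have hc := cons_toWord ((0 : Fin 2), s) ((e s) ^ i * w) hhead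
    rw [show (e s) ^ (i + 1) * w = FreeGroup.mk [((0 : Fin 2), s)] * ((e s) ^ i * w) from by
      rw [pow_succ', mul_assoc]; rfl]
    rw [hc, ih]
    simp [List.replicate_succ]

/-- the prefix lists -/
def Pre (i : ℕ) (s : Bool) : List (Fin 2 × Bool) :=
  List.replicate i ((0 : Fin 2), true) ++ [((1 : Fin 2), s)]

lemma Pre_getElem_self (i : ℕ) (s : Bool) (h : i < (Pre i s).length) :
    (Pre i s)[i] = ((1 : Fin 2), s) := by
  simp [Pre]

lemma Pre_getElem_lt {i j : ℕ} (hij : i < j) (s : Bool) (h : i < (Pre j s).length) :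
    (Pre j s)[i] = ((0 : Fin 2), true) := by
  simp only [Pre]
  rw [List.getElem_append_left (by simpa using hij), List.getElem_replicate]

lemma pre_unique {i j : ℕ} {s t : Bool} {L : List (Fin 2 × Bool)}
    (h1 : Pre i s <+: L) (h2 : Pre j t <+: L) : i = j ∧ s = t := by
  have key : ∀ {i j : ℕ} {s t : Bool}, i ≤ j → Pre i s <+: L → Pre j t <+: L → i = j ∧ s = t := by
    intro i j s t hij h1 h2
    have hi1 : i < (Pre i s).length := by simp [Pre]
    have hi2 : i < (Pre j t).length := by simp [Pre]; omega
    have e1 := h1.getElem hi1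
    have e2 := h2.getElem hi2
    rw [Pre_getElem_self i s hi1] at e1
    rcases lt_or_eq_of_le hij with hlt | rfl
    · rw [Pre_getElem_lt hlt t hi2] at e2
      have := e1.trans e2.symm
      simp [Prod.ext_iff] at this
    · rw [Pre_getElem_self i t hi2] at e2
      exact ⟨rfl, congrArg Prod.snd (e1.trans e2.symm)⟩
  rcases le_total i j with h | h
  · exact key h h1 h2
  · obtain ⟨h1', h2'⟩ := key h h2 h1
    exact ⟨h1'.symm, h2'.symm⟩

/-- the other letter -/
def f (s : Bool) : F2 := FreeGroup.mk [((1 : Fin 2), s)]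

lemma f_inv (s : Bool) : (f s)⁻¹ = f (!s) := by
  simp [f, FreeGroup.inv_mk, FreeGroup.invRev]

/-- the generators of the free subgroup -/
def gg (i : ℕ) : F2 := (e true) ^ i * f true * (e false) ^ i

lemma e_false_eq : (e false : F2) = (e true)⁻¹ := (e_inv true).symm

lemma gg_inv (i : ℕ) : (gg i)⁻¹ = (e true) ^ i * f false * (e false) ^ i := by
  rw [gg, e_false_eq, show (f false : F2) = (f true)⁻¹ from (f_inv true).symm]
  group

def X (i : ℕ) : Set F2 := {w | Pre i true <+: w.toWord}
def Y (i : ℕ) : Set F2 := {w | Pre i false <+: w.toWord}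

lemma main (i : ℕ) (s : Bool) (w : F2) (hw : ¬ Pre i (!s) <+: w.toWord) :
    Pre i s <+: (((e true) ^ i * f s * (e false) ^ i) * w).toWord := by
  set u := (e false) ^ i * w with hu_def
  have hw_eq : w = (e true) ^ i * u := by
    rw [hu_def, ← mul_assoc, e_false_eq, inv_pow, mul_inv_cancel, one_mul]
  have hu_head : ∀ y ∈ u.toWord.head?, y ≠ ((1 : Fin 2), !s) := by
    rcases hL : u.toWord with _ | ⟨hd, tl⟩
    · simp
    · intro y hy hye
      rw [List.head?_cons, Option.mem_some_iff] at hy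
      subst hy; subst hye
      apply hw
      have hwt : w.toWord = List.replicate i ((0 : Fin 2), true) ++ ((1 : Fin 2), !s) :: tl := by
        rw [hw_eq, pow_e_mul_toWord true i u (by simp [hL, Prod.ext_iff]), hL]
      rw [hwt]
      exact ⟨tl, by simp [Pre]⟩
  have hfsu : (f s * u).toWord = ((1 : Fin 2), s) :: u.toWord := by
    apply cons_toWord ((1 : Fin 2), s) u
    intro y hy hc
    exact hu_head y hy (Prod.ext hc.1.symm (by have h2 : s = !y.2 := hc.2; show y.2 = !s; rw [h2, Bool.not_not]))
  have h1 : ((e true) ^ i * f s * (e false) ^ i) * w = (e true) ^ i * (f s * u) := by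
    rw [hu_def]; simp [mul_assoc]
  rw [h1, pow_e_mul_toWord true i (f s * u) (by rw [hfsu]; simp [Prod.ext_iff]), hfsu]
  exact ⟨u.toWord, by simp [Pre]⟩

lemma lift_gg_injective (n : ℕ) (hn : 2 ≤ n) :
    Function.Injective (FreeGroup.lift (fun i : Fin n => gg (i : ℕ))) := by
  haveI : Nontrivial (Fin n) := Fin.nontrivial_iff_two_le.mpr hn
  apply FreeGroup.injective_lift_of_ping_pong _ (fun i : Fin n => X (i : ℕ))
      (fun i : Fin n => Y (i : ℕ))
  · intro i
    exact ⟨gg (i : ℕ) * 1, main _ true 1 (by simp [Pre, FreeGroup.toWord_one])⟩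
  · intro i j hij
    refine Set.disjoint_left.mpr fun w hwi hwj => ?_
    exact hij (Fin.ext (pre_unique hwi hwj).1)
  · intro i j hij
    refine Set.disjoint_left.mpr fun w hwi hwj => ?_
    exact hij (Fin.ext (pre_unique hwi hwj).1)
  · intro i j
    refine Set.disjoint_left.mpr fun w hwi hwj => ?_
    exact absurd (pre_unique hwi hwj).2 (by decide)
  · intro i z hz
    obtain ⟨w, hw, rfl⟩ := Set.mem_smul_set.mp hz
    show Pre (i : ℕ) true <+: (gg (i : ℕ) • w).toWord
    rw [smul_eq_mul]
    exact main _ true w (by simpa [Y] using hw)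
  · intro i z hz
    obtain ⟨w, hw, rfl⟩ := Set.mem_smul_set.mp hz
    show Pre (i : ℕ) false <+: ((gg (i : ℕ))⁻¹ • w).toWord
    rw [smul_eq_mul, gg_inv]
    exact main _ false w (by simpa [X] using hw)

end AutFaithfulAux

/-- If `G` contains a free subgroup of rank 2, then for every `n ≥ 2` the action of
`Aut(Fₙ)` on `Hom(Fₙ, G)` is faithful. -/
theorem aut_action_faithful_of_free_subgroup (G : Type*) [Group G]
    (hG : ∃ ι : FreeGroup (Fin 2) →* G, Function.Injective ι)
    (n : ℕ) (hn : 2 ≤ n) :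
    ∀ σ : MulAut (FreeGroup (Fin n)), σ ≠ 1 →
      ∃ x : FreeGroup (Fin n) →* G, x.comp σ.toMonoidHom ≠ x := by
  obtain ⟨ι, hι⟩ := hG
  intro σ hσ
  obtain ⟨w, hw⟩ : ∃ w : FreeGroup (Fin n), σ w ≠ w := by
    by_contra h
    push_neg at h
    exact hσ (MulEquiv.ext h)
  refine ⟨ι.comp (FreeGroup.lift fun i : Fin n => AutFaithfulAux.gg (i : ℕ)), fun hEq => ?_⟩
  have hInj : Function.Injective
      (ι.comp (FreeGroup.lift fun i : Fin n => AutFaithfulAux.gg (i : ℕ))) :=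
    hι.comp (AutFaithfulAux.lift_gg_injective n hn)
  exact hw (hInj (by simpa using DFunLike.congr_fun hEq w))
end
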